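/- Let $\mathcal{X}$ be a complex Hilbert space, $T > 0$, and let $A : \mathcal{X} \supseteq \operatorname{dom}(A) \to \mathcal{X}$ be a dissipative linear operator. Let $P : [0,T] \to \mathcal{L}(\mathcal{X})$ be such that each $P(t)$ is self-adjoint, coercive with $\langle P(t)x,x\rangle \geq \|x\|^2/U$, and $\|P(t)\|, \|\dot P(t)\|, \|G(t)\| \leq U$ for some constant $U \geq 1$, where $t \mapsto \langle P(t)x, y\rangle$ is differentiable with derivative $\langle \dot P(t)x, y\rangle$, and $G : [0,T] \to \mathcal{L}(\mathcal{X})$. Suppose $w \in C^1([0,T];\mathcal{X})$ satisfies $P(t)w(t) \in \operatorname{dom}(A)$ and $\dot w(t) = A P(t) w(t) + G(t) w(t)$ for all $t$, with $w(0) = 0$. Then $w(t) = 0$ for all $t \in [0,T]$. -/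

import Mathlib

/-!
The energy `v t = Re ⟪P t (w t), w t⟫` satisfies `v' = 2 Re ⟪A (P w) + G w, P w⟫ + Re ⟪Ṗ w, w⟫`,
which dissipativity, the norm bounds and coercivity bound by `σ v` with `σ = 2U³ + U²`.
Since `v 0 = 0`, Grönwall's inequality gives `v ≤ 0`, and coercivity then forces `w = 0`.
As `P` is only weakly differentiable, the product rule for `v` needs the operator-norm Lipschitz
bound `‖P r - P t‖ ≤ U |r - t|`, which the mean value theorem gives for each `r ↦ ⟪P r x, y⟫`.
-/

open Set Asymptotics Filter Topology RCLike
open scoped InnerProductSpace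

section

variable {𝕜 E : Type*} [RCLike 𝕜] [NormedAddCommGroup E] [InnerProductSpace 𝕜 E]

theorem norm_sub_le_of_hasDerivWithinAt_inner {P P' : ℝ → E →L[𝕜] E} {s : Set ℝ} {C : ℝ}
    (hs : Convex ℝ s)
    (hP : ∀ x y : E, ∀ r ∈ s, HasDerivWithinAt (fun r => ⟪P r x, y⟫_𝕜) ⟪P' r x, y⟫_𝕜 s r)
    (hP' : ∀ r ∈ s, ‖P' r‖ ≤ C) {a b : ℝ} (ha : a ∈ s) (hb : b ∈ s) :
    ‖P a - P b‖ ≤ C * |a - b| := by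
  have hC : 0 ≤ C := (norm_nonneg _).trans (hP' a ha)
  refine ContinuousLinearMap.opNorm_le_bound _ (by positivity) fun x => ?_
  set z := (P a - P b) x
  have hinner : ‖⟪P a x, z⟫_𝕜 - ⟪P b x, z⟫_𝕜‖ ≤ C * ‖x‖ * ‖z‖ * ‖a - b‖ := by
    refine hs.norm_image_sub_le_of_norm_hasDerivWithin_le (fun r hr => hP x z r hr)
      (fun r hr => ?_) hb ha
    calc ‖⟪P' r x, z⟫_𝕜‖ ≤ ‖P' r‖ * ‖x‖ * ‖z‖ := by
          grw [norm_inner_le_norm, (P' r).le_opNorm]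
      _ ≤ C * ‖x‖ * ‖z‖ := by gcongr; exact hP' r hr
  rw [← inner_sub_left, ← sub_apply, inner_self_eq_norm_sq_to_K,
    norm_pow, norm_ofReal, abs_norm, Real.norm_eq_abs] at hinner
  rcases (norm_nonneg z).eq_or_lt with hz | hz
  · rw [← hz]; positivity
  · nlinarith

theorem isLittleO_inner_sub_apply_self {P : ℝ → E →L[𝕜] E} {w : ℝ → E} {s : Set ℝ} {t C : ℝ}
    (hP : ∀ r ∈ s, ‖P r - P t‖ ≤ C * |r - t|) (hw : ContinuousWithinAt w s t) :
    (fun r => ⟪(P r - P t) (w r), w r⟫_𝕜 - ⟪(P r - P t) (w t), w t⟫_𝕜) =o[𝓝[s] t]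
      (fun r => r - t) := by
  have hsmall : Tendsto (fun r => ‖w r - w t‖ * (‖w r‖ + ‖w t‖)) (𝓝[s] t) (𝓝 0) := by
    have h : ContinuousWithinAt (fun r => ‖w r - w t‖ * (‖w r‖ + ‖w t‖)) s t := by fun_prop
    simpa [ContinuousWithinAt] using h
  have hbound : (fun r => ⟪(P r - P t) (w r), w r⟫_𝕜 - ⟪(P r - P t) (w t), w t⟫_𝕜) =O[𝓝[s] t]
      (fun r => ‖w r - w t‖ * (‖w r‖ + ‖w t‖) * (r - t)) := by
    refine IsBigO.of_bound C (eventually_nhdsWithin_of_forall fun r hr => ?_)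
    set Q := P r - P t
    have hsplit : ⟪Q (w r), w r⟫_𝕜 - ⟪Q (w t), w t⟫_𝕜
        = ⟪Q (w r - w t), w r⟫_𝕜 + ⟪Q (w t), w r - w t⟫_𝕜 := by
      simp only [map_sub, inner_sub_left, inner_sub_right]
      ring
    have hQ : ‖Q‖ ≤ C * |r - t| := hP r hr
    rw [hsplit, norm_mul, norm_mul, Real.norm_eq_abs, Real.norm_eq_abs, abs_norm,
      abs_of_nonneg (by positivity : 0 ≤ ‖w r‖ + ‖w t‖)]
    calc ‖⟪Q (w r - w t), w r⟫_𝕜 + ⟪Q (w t), w r - w t⟫_𝕜‖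
        ≤ ‖Q‖ * ‖w r - w t‖ * ‖w r‖ + ‖Q‖ * ‖w t‖ * ‖w r - w t‖ := by
          grw [norm_add_le, norm_inner_le_norm, norm_inner_le_norm, Q.le_opNorm, Q.le_opNorm]
      _ ≤ C * |r - t| * ‖w r - w t‖ * ‖w r‖ + C * |r - t| * ‖w t‖ * ‖w r - w t‖ := by
          gcongr
      _ = C * (‖w r - w t‖ * (‖w r‖ + ‖w t‖) * |r - t|) := by ring
  exact hbound.trans_isLittleO <| by
    simpa using (isLittleO_one_iff ℝ).2 hsmall |>.mul_isBigO (isBigO_refl (fun r => r - t) _)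

theorem HasDerivWithinAt.inner_apply_self [NormedSpace ℝ E] [IsScalarTower ℝ 𝕜 E]
    {P : ℝ → E →L[𝕜] E} {P' : E →L[𝕜] E} {w : ℝ → E} {w' : E} {s : Set ℝ} {t C : ℝ}
    (hPt : HasDerivWithinAt (fun r => ⟪P r (w t), w t⟫_𝕜) ⟪P' (w t), w t⟫_𝕜 s t)
    (hP : ∀ r ∈ s, ‖P r - P t‖ ≤ C * |r - t|) (hw : HasDerivWithinAt w w' s t) :
    HasDerivWithinAt (fun r => ⟪P r (w r), w r⟫_𝕜)
      (⟪P t (w t), w'⟫_𝕜 + ⟪P t w', w t⟫_𝕜 + ⟪P' (w t), w t⟫_𝕜) s t := by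
  have hfixed : HasDerivWithinAt (fun r => ⟪P t (w r), w r⟫_𝕜)
      (⟪P t (w t), w'⟫_𝕜 + ⟪P t w', w t⟫_𝕜) s t :=
    ((((P t).restrictScalars ℝ).hasFDerivAt).comp_hasDerivWithinAt t hw).inner 𝕜 hw
  have hrest : HasDerivWithinAt
      (fun r => ⟪(P r - P t) (w r), w r⟫_𝕜 - ⟪(P r - P t) (w t), w t⟫_𝕜) 0 s t := by
    rw [hasDerivWithinAt_iff_isLittleO]
    simpa using isLittleO_inner_sub_apply_self hP hw.continuousWithinAt
  have hdecomp : ∀ r, ⟪P r (w r), w r⟫_𝕜 = ⟪P t (w r), w r⟫_𝕜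
      + (⟪P r (w t), w t⟫_𝕜 - ⟪P t (w t), w t⟫_𝕜)
      + (⟪(P r - P t) (w r), w r⟫_𝕜 - ⟪(P r - P t) (w t), w t⟫_𝕜) := fun r => by
    simp only [sub_apply, inner_sub_left]
    ring
  have hsum := (hfixed.add (hPt.sub_const ⟪P t (w t), w t⟫_𝕜)).add hrest
  rw [add_zero] at hsum
  exact hsum.congr (fun r _ => hdecomp r) (hdecomp t)

theorem re_inner_add_inner_le {Q Q' G : E →L[𝕜] E} (hQ : (Q : E →ₗ[𝕜] E).IsSymmetric) {x a : E}
    (ha : re ⟪a, Q x⟫_𝕜 ≤ 0) :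
    re (⟪Q x, a + G x⟫_𝕜 + ⟪Q (a + G x), x⟫_𝕜 + ⟪Q' x, x⟫_𝕜)
      ≤ (2 * ‖G‖ * ‖Q‖ + ‖Q'‖) * ‖x‖ ^ 2 := by
  set y := a + G x
  have hsymm : ⟪Q y, x⟫_𝕜 = ⟪y, Q x⟫_𝕜 := hQ y x
  have hconj : re ⟪Q x, y⟫_𝕜 = re ⟪y, Q x⟫_𝕜 := by rw [← inner_conj_symm, conj_re]
  have hG : re ⟪G x, Q x⟫_𝕜 ≤ ‖G‖ * ‖Q‖ * ‖x‖ ^ 2 :=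
    calc re ⟪G x, Q x⟫_𝕜 ≤ ‖G x‖ * ‖Q x‖ := re_inner_le_norm _ _
      _ ≤ ‖G‖ * ‖x‖ * (‖Q‖ * ‖x‖) := by gcongr <;> apply ContinuousLinearMap.le_opNorm
      _ = ‖G‖ * ‖Q‖ * ‖x‖ ^ 2 := by ring
  have hQ' : re ⟪Q' x, x⟫_𝕜 ≤ ‖Q'‖ * ‖x‖ ^ 2 :=
    calc re ⟪Q' x, x⟫_𝕜 ≤ ‖Q' x‖ * ‖x‖ := re_inner_le_norm _ _
      _ ≤ ‖Q'‖ * ‖x‖ * ‖x‖ := by gcongr; apply ContinuousLinearMap.le_opNorm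
      _ = ‖Q'‖ * ‖x‖ ^ 2 := by ring
  rw [map_add, map_add, hsymm, hconj, inner_add_left, map_add]
  linarith

end

theorem nonpos_of_hasDerivWithinAt_le_mul_self {f f' : ℝ → ℝ} {K a b : ℝ}
    (hf : ∀ x ∈ Icc a b, HasDerivWithinAt f (f' x) (Icc a b) x) (ha : f a ≤ 0)
    (hf' : ∀ x ∈ Ico a b, f' x ≤ K * f x) :
    ∀ x ∈ Icc a b, f x ≤ 0 := by
  intro x hx
  have hright : ∀ y ∈ Ico a b, HasDerivWithinAt f (f' y) (Ici y) y := fun y hy =>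
    (hf y (Ico_subset_Icc_self hy)).mono_of_mem_nhdsWithin
      (mem_of_superset (Icc_mem_nhdsGE hy.2) (Icc_subset_Icc_left hy.1))
  have := le_gronwallBound_of_liminf_deriv_right_le (δ := 0) (ε := 0)
    (fun y hy => (hf y hy).continuousWithinAt)
    (fun y hy _ hr => (hright y hy).liminf_right_slope_le hr) ha (by simpa using hf') x hx
  rwa [gronwallBound_ε0_δ0] at this

theorem stmt_14_general
    {X : Type*} [NormedAddCommGroup X] [InnerProductSpace ℂ X] [CompleteSpace X]
    (T : ℝ)
    (dom : Submodule ℂ X) (A : dom →ₗ[ℂ] X)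
    (hdiss : ∀ x : dom, (inner ℂ (A x) (x : X) : ℂ).re ≤ 0)
    (U : ℝ) (hU : 1 ≤ U)
    (P Pd G : ℝ → X →L[ℂ] X)
    (hPsa : ∀ t ∈ Set.Icc 0 T, IsSelfAdjoint (P t))
    (hPcoer : ∀ t ∈ Set.Icc 0 T, ∀ x : X, ‖x‖ ^ 2 / U ≤ (inner ℂ ((P t) x) x : ℂ).re)
    (hPbound : ∀ t ∈ Set.Icc 0 T, ‖P t‖ ≤ U)
    (hPdbound : ∀ t ∈ Set.Icc 0 T, ‖Pd t‖ ≤ U)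
    (hGbound : ∀ t ∈ Set.Icc 0 T, ‖G t‖ ≤ U)
    (hPderiv : ∀ x y : X, ∀ t ∈ Set.Icc 0 T,
      HasDerivWithinAt (fun s => (inner ℂ ((P s) x) y : ℂ)) (inner ℂ ((Pd t) x) y)
        (Set.Icc 0 T) t)
    (w w' : ℝ → X)
    (hw : ∀ t ∈ Set.Icc 0 T, HasDerivWithinAt w (w' t) (Set.Icc 0 T) t)
    (hmem : ∀ t ∈ Set.Icc 0 T, (P t) (w t) ∈ dom)
    (hode : ∀ t : ℝ, ∀ ht : t ∈ Set.Icc 0 T,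
      w' t = A ⟨(P t) (w t), hmem t ht⟩ + (G t) (w t))
    (h0 : w 0 = 0) :
    ∀ t ∈ Set.Icc 0 T, w t = 0 := by
  have hU0 : 0 < U := one_pos.trans_le hU
  have hLip : ∀ t ∈ Icc 0 T, ∀ r ∈ Icc 0 T, ‖P r - P t‖ ≤ U * |r - t| := fun t ht r hr =>
    norm_sub_le_of_hasDerivWithinAt_inner (convex_Icc 0 T) hPderiv hPdbound hr ht
  set v : ℝ → ℝ := fun t => (⟪P t (w t), w t⟫_ℂ).re
  have hv : ∀ t ∈ Icc 0 T, HasDerivWithinAt v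
      (⟪P t (w t), w' t⟫_ℂ + ⟪P t (w' t), w t⟫_ℂ + ⟪Pd t (w t), w t⟫_ℂ).re (Icc 0 T) t :=
    fun t ht => Complex.reCLM.hasFDerivAt.comp_hasDerivWithinAt t
      ((hPderiv _ _ t ht).inner_apply_self (hLip t ht) (hw t ht))
  have hcoer : ∀ t ∈ Icc 0 T, ‖w t‖ ^ 2 ≤ U * v t := fun t ht => by
    have := hPcoer t ht (w t)
    rwa [div_le_iff₀ hU0, mul_comm] at this
  have hgrowth : ∀ t ∈ Icc 0 T,
      (⟪P t (w t), w' t⟫_ℂ + ⟪P t (w' t), w t⟫_ℂ + ⟪Pd t (w t), w t⟫_ℂ).re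
        ≤ (2 * U * U + U) * U * v t := fun t ht => by
    rw [hode t ht]
    calc _ ≤ (2 * ‖G t‖ * ‖P t‖ + ‖Pd t‖) * ‖w t‖ ^ 2 :=
          re_inner_add_inner_le (hPsa t ht).isSymmetric (hdiss _)
      _ ≤ (2 * U * U + U) * (U * v t) := by
          gcongr
          exacts [hGbound t ht, hPbound t ht, hPdbound t ht, hcoer t ht]
      _ = (2 * U * U + U) * U * v t := by ring
  have hv_nonpos := nonpos_of_hasDerivWithinAt_le_mul_self hv (by simp [v, h0])
    fun t ht => hgrowth t (Ico_subset_Icc_self ht)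
  intro t ht
  have : ‖w t‖ ^ 2 ≤ 0 :=
    (hcoer t ht).trans (mul_nonpos_of_nonneg_of_nonpos hU0.le (hv_nonpos t ht))
  simpa using this

theorem stmt_14
    {X : Type*} [NormedAddCommGroup X] [InnerProductSpace ℂ X] [CompleteSpace X]
    (T : ℝ) (hT : 0 < T)
    (dom : Submodule ℂ X) (A : dom →ₗ[ℂ] X)
    (hdiss : ∀ x : dom, (inner ℂ (A x) (x : X) : ℂ).re ≤ 0)
    (U : ℝ) (hU : 1 ≤ U)
    (P Pd G : ℝ → X →L[ℂ] X)
    (hPsa : ∀ t ∈ Set.Icc 0 T, IsSelfAdjoint (P t))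
    (hPcoer : ∀ t ∈ Set.Icc 0 T, ∀ x : X, ‖x‖ ^ 2 / U ≤ (inner ℂ ((P t) x) x : ℂ).re)
    (hPbound : ∀ t ∈ Set.Icc 0 T, ‖P t‖ ≤ U)
    (hPdbound : ∀ t ∈ Set.Icc 0 T, ‖Pd t‖ ≤ U)
    (hGbound : ∀ t ∈ Set.Icc 0 T, ‖G t‖ ≤ U)
    (hPderiv : ∀ x y : X, ∀ t ∈ Set.Icc 0 T,
      HasDerivWithinAt (fun s => (inner ℂ ((P s) x) y : ℂ)) (inner ℂ ((Pd t) x) y)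
        (Set.Icc 0 T) t)
    (w w' : ℝ → X)
    (hw : ∀ t ∈ Set.Icc 0 T, HasDerivWithinAt w (w' t) (Set.Icc 0 T) t)
    (hw'cont : ContinuousOn w' (Set.Icc 0 T))
    (hmem : ∀ t ∈ Set.Icc 0 T, (P t) (w t) ∈ dom)
    (hode : ∀ t : ℝ, ∀ ht : t ∈ Set.Icc 0 T,
      w' t = A ⟨(P t) (w t), hmem t ht⟩ + (G t) (w t))
    (h0 : w 0 = 0) :
    ∀ t ∈ Set.Icc 0 T, w t = 0 :=
  stmt_14_general T dom A hdiss U hU P Pd G hPsa hPcoer hPbound hPdbound hGbound hPderiv w w' hw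
    hmem hode h0
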